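/- Let {Y_n}_{n≥1} be independent, non-negative real random variables, and set 𝔖 := Σ_{n=1}^∞ Y_n and M_k := Σ_{n=1}^∞ E[Y_n^k] for k > 0. Then for every non-integer q > 2, writing [q] for the integer part of q, E[𝔖^q] ≤ 2^{[q]−1} ( M_q + M_{q−[q]} · E[𝔖^{[q]}] ). -/

import Mathlib

/-!
Let `m = ⌊q⌋₊`, `r = q - m ∈ (0, 1)`, and let `𝔖ₙ` be the sum of the terms other than `Yₙ`.
Since `r ≤ 1`, `𝔖^r ≤ Σ Yₙ^r`, so `𝔖^q ≤ Σₙ Yₙ^r 𝔖^m`; convexity of `x ↦ x^m` then gives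
`Yₙ^r 𝔖^m = Yₙ^r (Yₙ + 𝔖ₙ)^m ≤ 2^{m-1} (Yₙ^q + Yₙ^r 𝔖ₙ^m)`. Taking expectations, `Yₙ` is
independent of `𝔖ₙ`, so `E[Yₙ^r 𝔖ₙ^m] = E[Yₙ^r] E[𝔖ₙ^m] ≤ E[Yₙ^r] E[𝔖^m]`.
-/

open MeasureTheory ProbabilityTheory
open scoped ENNReal NNReal

namespace ENNReal

theorem add_pow_le_two_pow_mul (a b : ℝ≥0∞) (n : ℕ) :
    (a + b) ^ n ≤ 2 ^ (n - 1) * (a ^ n + b ^ n) := by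
  rcases Nat.eq_zero_or_pos n with rfl | hn
  · simp
  rcases eq_or_ne a ⊤ with rfl | ha
  · simp [top_pow hn.ne']
  rcases eq_or_ne b ⊤ with rfl | hb
  · simp [top_pow hn.ne']
  lift a to ℝ≥0 using ha
  lift b to ℝ≥0 using hb
  exact_mod_cast add_pow_le (zero_le : 0 ≤ a) (zero_le : 0 ≤ b) n

theorem rpow_finsetSum_le_finsetSum_rpow {ι : Type*} (s : Finset ι) (a : ι → ℝ≥0∞) {r : ℝ}
    (h0 : 0 < r) (h1 : r ≤ 1) : (∑ i ∈ s, a i) ^ r ≤ ∑ i ∈ s, a i ^ r := by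
  classical
  induction s using Finset.induction_on with
  | empty => simp [zero_rpow_of_pos h0]
  | insert i s hi ih =>
    rw [Finset.sum_insert hi, Finset.sum_insert hi]
    exact (rpow_add_le_add_rpow _ _ h0.le h1).trans (add_le_add_right ih _)

theorem rpow_tsum_le_tsum_rpow {ι : Type*} (a : ι → ℝ≥0∞) {r : ℝ} (h0 : 0 < r) (h1 : r ≤ 1) :
    (∑' i, a i) ^ r ≤ ∑' i, a i ^ r := by
  rw [← le_rpow_inv_iff h0, ENNReal.tsum_eq_iSup_sum]
  exact iSup_le fun s => (le_rpow_inv_iff h0).mpr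
    ((rpow_finsetSum_le_finsetSum_rpow s a h0 h1).trans (ENNReal.sum_le_tsum s))

theorem tsum_eq_add_tsum_compl_singleton {ι : Type*} (a : ι → ℝ≥0∞) (i : ι) :
    ∑' j, a j = a i + ∑' j : ({i}ᶜ : Set ι), a j := by
  rw [← ENNReal.summable.tsum_add_tsum_compl (s := {i}) ENNReal.summable, tsum_singleton]

theorem rpow_tsum_le_two_pow_mul_tsum {ι : Type*} (a : ι → ℝ≥0∞) {q : ℝ} {m : ℕ}
    (hmq : (m : ℝ) < q) (hqm : q ≤ m + 1) :
    (∑' i, a i) ^ q ≤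
      2 ^ (m - 1) * ∑' i, (a i ^ q + a i ^ (q - m) * (∑' j : ({i}ᶜ : Set ι), a j) ^ m) := by
  have hr0 : 0 < q - m := sub_pos.mpr hmq
  have hsplit : ∀ x : ℝ≥0∞, x ^ q = x ^ (q - m) * x ^ m := fun x => by
    rw [← rpow_natCast, ← rpow_add_of_nonneg _ _ hr0.le m.cast_nonneg, sub_add_cancel]
  calc (∑' i, a i) ^ q = (∑' i, a i) ^ (q - m) * (∑' i, a i) ^ m := hsplit _
    _ ≤ ∑' i, a i ^ (q - m) * (∑' j, a j) ^ m := by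
      rw [ENNReal.tsum_mul_right]
      gcongr
      exact rpow_tsum_le_tsum_rpow a hr0 (by linarith)
    _ ≤ ∑' i, a i ^ (q - m) * (2 ^ (m - 1) * (a i ^ m + (∑' j : ({i}ᶜ : Set ι), a j) ^ m)) := by
      gcongr with i
      rw [tsum_eq_add_tsum_compl_singleton a i]
      exact add_pow_le_two_pow_mul _ _ m
    _ = _ := by
      rw [← ENNReal.tsum_mul_left]
      refine tsum_congr fun i => ?_
      rw [hsplit]
      ring

end ENNReal

theorem ProbabilityTheory.iIndepFun.indepFun_compl_singleton
    {Ω ι : Type*} {β : ι → Type*} {mΩ : MeasurableSpace Ω} {mβ : ∀ i, MeasurableSpace (β i)}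
    {P : Measure Ω} {Y : ∀ i, Ω → β i} (hindep : iIndepFun Y P) (hY : ∀ i, Measurable (Y i))
    (i : ι) : IndepFun (Y i) (fun ω (j : ({i}ᶜ : Set ι)) => Y j ω) P := by
  have hle : ∀ j, (mβ j).comap (Y j) ≤ mΩ := fun j => (hY j).comap_le
  have h := indep_biSup_compl hle hindep.iIndep {i}
  simp only [Set.mem_singleton_iff, iSup_iSup_eq_left] at h
  refine indep_of_indep_of_le_right h ?_
  simp only [MeasurableSpace.pi, MeasurableSpace.comap_iSup, MeasurableSpace.comap_comp]
  exact iSup_le fun j => le_biSup (fun j => (mβ j).comap (Y j)) j.2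

theorem ProbabilityTheory.iIndepFun.lintegral_rpow_tsum_le
    {Ω ι : Type*} [Countable ι] {mΩ : MeasurableSpace Ω} {P : Measure Ω} {X : ι → Ω → ℝ≥0∞}
    (hindep : iIndepFun X P) (hX : ∀ i, Measurable (X i)) {q : ℝ} {m : ℕ}
    (hmq : (m : ℝ) < q) (hqm : q ≤ m + 1) :
    ∫⁻ ω, (∑' i, X i ω) ^ q ∂P
      ≤ 2 ^ (m - 1) * ((∑' i, ∫⁻ ω, X i ω ^ q ∂P)
          + (∑' i, ∫⁻ ω, X i ω ^ (q - m) ∂P) * ∫⁻ ω, (∑' i, X i ω) ^ m ∂P) := by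
  set S : Ω → ℝ≥0∞ := fun ω => ∑' i, X i ω
  set T : ι → Ω → ℝ≥0∞ := fun i ω => ∑' j : ({i}ᶜ : Set ι), X j ω
  have hpow : ∀ (s : ℝ) i, Measurable fun ω => X i ω ^ s := fun s i => (hX i).pow_const s
  have hT : ∀ i, Measurable (T i) := fun i => Measurable.tsum fun j => hX j
  have hTS : ∀ i ω, T i ω ≤ S ω := fun i ω =>
    ENNReal.tsum_comp_le_tsum_of_injective Subtype.val_injective _
  have hmixed : ∀ i, ∫⁻ ω, X i ω ^ (q - m) * T i ω ^ m ∂P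
      = (∫⁻ ω, X i ω ^ (q - m) ∂P) * ∫⁻ ω, T i ω ^ m ∂P := fun i =>
    lintegral_mul_eq_lintegral_mul_lintegral_of_indepFun (hpow _ i) ((hT i).pow_const m)
      ((hindep.indepFun_compl_singleton hX i).comp (measurable_id.pow_const _)
        ((Measurable.tsum fun j => measurable_pi_apply j).pow_const m))
  calc ∫⁻ ω, S ω ^ q ∂P
      ≤ ∫⁻ ω, 2 ^ (m - 1) * ∑' i, (X i ω ^ q + X i ω ^ (q - m) * T i ω ^ m) ∂P :=
        lintegral_mono fun ω => ENNReal.rpow_tsum_le_two_pow_mul_tsum _ hmq hqm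
    _ = 2 ^ (m - 1) * ∑' i, ((∫⁻ ω, X i ω ^ q ∂P)
          + (∫⁻ ω, X i ω ^ (q - m) ∂P) * ∫⁻ ω, T i ω ^ m ∂P) := by
        rw [lintegral_const_mul' _ _ (by simp), lintegral_tsum fun i => by fun_prop]
        refine congrArg _ (tsum_congr fun i => ?_)
        rw [lintegral_add_left (hpow q i), hmixed i]
    _ ≤ 2 ^ (m - 1) * ∑' i, ((∫⁻ ω, X i ω ^ q ∂P)
          + (∫⁻ ω, X i ω ^ (q - m) ∂P) * ∫⁻ ω, S ω ^ m ∂P) := by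
        gcongr with i ω
        exact hTS i ω
    _ = _ := by rw [ENNReal.tsum_add, ENNReal.tsum_mul_right]

theorem indep_sum_moment_bound_noninteger_general
    {Ω : Type*} [MeasurableSpace Ω] (P : Measure Ω)
    (Y : ℕ → Ω → ℝ) (hmeas : ∀ n, Measurable (Y n))
    (hindep : iIndepFun Y P)
    (q : ℝ) (hq : 2 < q) (hqnotint : ∀ n : ℕ, q ≠ n) :
    ∫⁻ ω, (∑' n, ENNReal.ofReal (Y n ω)) ^ q ∂P
      ≤ 2 ^ (⌊q⌋₊ - 1)
          * ((∑' n, ∫⁻ ω, ENNReal.ofReal (Y n ω) ^ q ∂P)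
            + (∑' n, ∫⁻ ω, ENNReal.ofReal (Y n ω) ^ (q - (⌊q⌋₊ : ℝ)) ∂P)
              * ∫⁻ ω, (∑' n, ENNReal.ofReal (Y n ω)) ^ (⌊q⌋₊ : ℕ) ∂P) := by
  have hmq : (⌊q⌋₊ : ℝ) < q :=
    (Nat.floor_le (by linarith)).lt_of_ne fun h => hqnotint ⌊q⌋₊ h.symm
  exact (hindep.comp _ fun _ => ENNReal.measurable_ofReal).lintegral_rpow_tsum_le
    (fun n => ENNReal.measurable_ofReal.comp (hmeas n)) hmq (Nat.lt_floor_add_one q).le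

/-- for independent non-negative random variables `Y_n`, with
`𝔖 := Σ Y_n` and `M_s := Σ E[Y_n^s]`, one has, for every non-integer `q > 2`
(with `[q] = ⌊q⌋` its integer part),
`E[𝔖^q] ≤ 2^{[q]-1} ( M_q + M_{q-[q]} · E[𝔖^{[q]}] )`
(all quantities computed in `ℝ≥0∞`, so the inequality holds trivially when
some quantity is infinite). -/
theorem indep_sum_moment_bound_noninteger
    {Ω : Type*} [MeasurableSpace Ω] (P : Measure Ω) [IsProbabilityMeasure P]
    (Y : ℕ → Ω → ℝ) (hmeas : ∀ n, Measurable (Y n)) (hpos : ∀ n ω, 0 ≤ Y n ω)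
    (hindep : iIndepFun Y P)
    (q : ℝ) (hq : 2 < q) (hqnotint : ∀ n : ℕ, q ≠ n) :
    ∫⁻ ω, (∑' n, ENNReal.ofReal (Y n ω)) ^ q ∂P
      ≤ 2 ^ (⌊q⌋₊ - 1)
          * ((∑' n, ∫⁻ ω, ENNReal.ofReal (Y n ω) ^ q ∂P)
            + (∑' n, ∫⁻ ω, ENNReal.ofReal (Y n ω) ^ (q - (⌊q⌋₊ : ℝ)) ∂P)
              * ∫⁻ ω, (∑' n, ENNReal.ofReal (Y n ω)) ^ (⌊q⌋₊ : ℕ) ∂P) :=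
  indep_sum_moment_bound_noninteger_general P Y hmeas hindep q hq hqnotint
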